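/- arXiv:1709.08533 — 2 statements merged into one kernel-verified Lean document; each statement's English description precedes it below -/
import Mathlib

section
/- In any condition algebra M (in the total, unrestricted sense) that additionally satisfies the copy equation A⁰A¹ = A for all A ∈ M: the inversion behaves as a group inverse, i.e. A·A⁻ = I for all A ∈ M. -/
/-- A condition algebra (in the total, unrestricted sense): a commutative
monoid with an inversion and two copy operations. -/
class ConditionAlgebra (M : Type*) extends CommMonoid M where
  inv : M → M
  c0 : M → M
  c1 : M → M
  inv_inv : ∀ A : M, inv (inv A) = A
  inv_mul : ∀ A B : M, inv (A * B) = inv A * inv B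
  c0_mul : ∀ A B : M, c0 (A * B) = c0 A * c0 B
  c1_mul : ∀ A B : M, c1 (A * B) = c1 A * c1 B
  copy_cancel : ∀ A : M, c0 A * inv (c1 A) = 1

/-!
The copy equation at `I` says `I⁰ I¹ = I`, so `I⁰` is a unit; it is also idempotent, since
`(·)⁰` is multiplicative, hence `I⁰ = I`, and then `I¹ = I` and `I⁻ = I⁰ (I¹)⁻ = I`.
Applying the inversion to `A⁰ (A¹)⁻ = I` now gives `(A⁰)⁻ A¹ = I`, and
`A A⁻ = A⁰ A¹ (A⁰)⁻ (A¹)⁻ = (A⁰ (A¹)⁻) ((A⁰)⁻ A¹) = I`.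
-/

namespace ConditionAlgebra

variable {M : Type*} [ConditionAlgebra M]

theorem isIdempotentElem_c0_one : IsIdempotentElem (c0 (1 : M)) := by
  rw [IsIdempotentElem, ← c0_mul, one_mul]

theorem inv_c0_mul_c1_eq_one (hinv : inv (1 : M) = 1) (A : M) : inv (c0 A) * c1 A = 1 := by
  simpa only [inv_mul, ConditionAlgebra.inv_inv, hinv] using congrArg inv (copy_cancel A)

theorem c0_one_eq_one (copy_eq : ∀ A : M, c0 A * c1 A = A) : c0 (1 : M) = 1 :=
  (IsIdempotentElem.iff_eq_one_of_isUnit (.of_mul_eq_one _ (copy_eq 1))).mp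
    isIdempotentElem_c0_one

theorem c1_one_eq_one (copy_eq : ∀ A : M, c0 A * c1 A = A) : c1 (1 : M) = 1 := by
  simpa only [c0_one_eq_one copy_eq, one_mul] using copy_eq 1

theorem inv_one_eq_one (copy_eq : ∀ A : M, c0 A * c1 A = A) : inv (1 : M) = 1 := by
  simpa only [c0_one_eq_one copy_eq, c1_one_eq_one copy_eq, one_mul] using copy_cancel (1 : M)

end ConditionAlgebra

open ConditionAlgebra in
/-- With the copy equation A⁰A¹ = A, inversion behaves as a group inverse. -/
theorem inv_is_group_inverse (M : Type*) [ConditionAlgebra M]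
    (copy_eq : ∀ A : M, c0 A * c1 A = A) :
    ∀ A : M, A * inv A = 1 := by
  intro A
  calc A * inv A = (c0 A * c1 A) * (inv (c0 A) * inv (c1 A)) := by rw [← inv_mul, copy_eq]
    _ = (c0 A * inv (c1 A)) * (inv (c0 A) * c1 A) := by ac_rfl
    _ = 1 := by rw [copy_cancel, inv_c0_mul_c1_eq_one (inv_one_eq_one copy_eq), one_mul]
end

section
/- For all constructor numbers x and y (over a fixed condition algebra C), the CN term (x + y⁰) − y¹ equality-reduces to x, i.e. (x + y⁰) − y¹ →̲ x. -/
/-- A condition algebra with bracket: a commutative monoid with inversion,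
two copy operations, and a bracket operation. -/
class CondAlg (C : Type*) extends CommMonoid C where
  inv : C → C
  c0 : C → C
  c1 : C → C
  brkt : C → C
  inv_inv : ∀ A : C, inv (inv A) = A
  inv_mul : ∀ A B : C, inv (A * B) = inv A * inv B
  c0_mul : ∀ A B : C, c0 (A * B) = c0 A * c0 B
  c1_mul : ∀ A B : C, c1 (A * B) = c1 A * c1 B
  copy_cancel : ∀ A : C, c0 A * inv (c1 A) = 1
  copy_eq : ∀ A : C, c0 A * c1 A = A
  brkt_one : brkt (1 : C) = 1
  brkt_mul : ∀ A B : C, brkt A * brkt B = brkt (A * B)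

/-- CN number terms over the condition algebra `C`. -/
inductive CN (C : Type*) : Type _
  | zero : C → CN C                 -- A·0
  | suc : C → CN C → CN C           -- (A suc)a
  | ann : C → C → CN C → CN C       -- (A,B ann)a
  | copy0 : CN C → CN C             -- a⁰
  | copy1 : CN C → CN C             -- a¹
  | add : CN C → CN C → CN C        -- a + b
  | sub : CN C → CN C → CN C        -- a − b

variable {C : Type*} [CondAlg C]

open CondAlg

/-- CNSmooth equality `≃` on CN number terms. -/
inductive CNSmooth : CN C → CN C → Prop
  | refl (a : CN C) : CNSmooth a a
  | symm {a b} : CNSmooth a b → CNSmooth b a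
  | trans {a b c} : CNSmooth a b → CNSmooth b c → CNSmooth a c
  -- congruence rules
  | suc_congr (A : C) {a b} : CNSmooth a b → CNSmooth (.suc A a) (.suc A b)
  | ann_congr (A B : C) {a b} : CNSmooth a b → CNSmooth (.ann A B a) (.ann A B b)
  | copy0_congr {a b} : CNSmooth a b → CNSmooth (.copy0 a) (.copy0 b)
  | copy1_congr {a b} : CNSmooth a b → CNSmooth (.copy1 a) (.copy1 b)
  | add_congr {a a' b b'} : CNSmooth a a' → CNSmooth b b' →
      CNSmooth (.add a b) (.add a' b')
  | sub_congr {a a' b b'} : CNSmooth a a' → CNSmooth b b' →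
      CNSmooth (.sub a b) (.sub a' b')
  -- exchange laws
  | exch_suc_suc (A B : C) (a : CN C) :
      CNSmooth (.suc A (.suc B a)) (.suc B (.suc A a))
  | exch_ann_suc (A₀ A₁ B : C) (a : CN C) :
      CNSmooth (.ann A₀ A₁ (.suc B a)) (.suc B (.ann A₀ A₁ a))
  | exch_ann_ann (A₀ A₁ B₀ B₁ : C) (a : CN C) :
      CNSmooth (.ann A₀ A₁ (.ann B₀ B₁ a)) (.ann B₀ B₁ (.ann A₀ A₁ a))
  | exch_ann_ann' (A₀ A₁ B₀ B₁ : C) (a : CN C) :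
      CNSmooth (.ann A₀ A₁ (.ann B₀ B₁ a)) (.ann A₀ B₁ (.ann B₀ A₁ a))
  | exch_suc_ann (A B₀ B₁ : C) (a : CN C) :
      CNSmooth (.suc A (.ann B₀ B₁ a)) (.suc B₀ (.ann A B₁ a))
  -- bracket laws
  | brkt_zero (A : C) : CNSmooth (.zero A) (.zero (brkt A))
  | brkt_suc (A : C) (a : CN C) : CNSmooth (.suc A a) (.suc (brkt A) a)
  | brkt_ann_left (A B : C) (a : CN C) :
      CNSmooth (.ann A B a) (.ann (brkt A) B a)
  | brkt_ann_right (A B : C) (a : CN C) :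
      CNSmooth (.ann A B a) (.ann A (brkt B) a)
  -- copy-distribution laws
  | copy0_zero (A : C) : CNSmooth (.copy0 (.zero A)) (.zero (c0 A))
  | copy1_zero (A : C) : CNSmooth (.copy1 (.zero A)) (.zero (c1 A))
  | copy0_suc (A : C) (a : CN C) :
      CNSmooth (.copy0 (.suc A a)) (.suc (c0 A) (.copy0 a))
  | copy1_suc (A : C) (a : CN C) :
      CNSmooth (.copy1 (.suc A a)) (.suc (c1 A) (.copy1 a))
  | copy0_ann (A B : C) (a : CN C) :
      CNSmooth (.copy0 (.ann A B a)) (.ann (c0 A) (c0 B) (.copy0 a))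
  | copy1_ann (A B : C) (a : CN C) :
      CNSmooth (.copy1 (.ann A B a)) (.ann (c1 A) (c1 B) (.copy1 a))
  -- inversion-simplification
  | inv_simp (A B : C) (a : CN C) (h : A * inv B = 1) :
      CNSmooth (.ann A B a) a

/-- Equality reduction `→̲`: the smallest reflexive, transitive, congruent
relation containing smooth equality and all instances of the addition and
subtraction program rules. -/
inductive CNEqRed : CN C → CN C → Prop
  | refl (a : CN C) : CNEqRed a a
  | trans {a b c} : CNEqRed a b → CNEqRed b c → CNEqRed a c
  -- contains smooth equality
  | of_smooth {a b} : CNSmooth a b → CNEqRed a b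
  -- congruence rules
  | suc_congr (A : C) {a b} : CNEqRed a b → CNEqRed (.suc A a) (.suc A b)
  | ann_congr (A B : C) {a b} : CNEqRed a b → CNEqRed (.ann A B a) (.ann A B b)
  | copy0_congr {a b} : CNEqRed a b → CNEqRed (.copy0 a) (.copy0 b)
  | copy1_congr {a b} : CNEqRed a b → CNEqRed (.copy1 a) (.copy1 b)
  | add_congr {a a' b b'} : CNEqRed a a' → CNEqRed b b' →
      CNEqRed (.add a b) (.add a' b')
  | sub_congr {a a' b b'} : CNEqRed a a' → CNEqRed b b' →
      CNEqRed (.sub a b) (.sub a' b')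
  -- addition program rules
  | add_suc (X : C) (x y : CN C) :
      CNEqRed (.add (.suc X x) y) (.suc X (.add x y))
  | add_ann (X₀ X₁ : C) (x y : CN C) :
      CNEqRed (.add (.ann X₀ X₁ x) y) (.ann X₀ X₁ (.add x y))
  | add_zero_suc (X Y : C) (y : CN C) :
      CNEqRed (.add (.zero X) (.suc Y y)) (.suc Y (.add (.zero X) y))
  | add_zero_ann (X Y₀ Y₁ : C) (y : CN C) :
      CNEqRed (.add (.zero X) (.ann Y₀ Y₁ y)) (.ann Y₀ Y₁ (.add (.zero X) y))
  | add_zero_zero (X Y : C) :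
      CNEqRed (.add (.zero X) (.zero Y)) (.zero (CondAlg.brkt (X * Y)))
  -- subtraction program rules
  | sub_suc_suc (X Y : C) (x y : CN C) :
      CNEqRed (.sub (.suc X x) (.suc Y y)) (.ann X Y (.sub x y))
  | sub_ann (Y₀ Y₁ : C) (x y : CN C) :
      CNEqRed (.sub x (.ann Y₀ Y₁ y)) (.ann Y₁ Y₀ (.sub x y))
  | sub_suc_zero (X Y : C) (x : CN C) :
      CNEqRed (.sub (.suc X x) (.zero Y)) (.suc X (.sub x (.zero Y)))
  | sub_zero_zero (X Y : C) :
      CNEqRed (.sub (.zero X) (.zero Y)) (.zero (CondAlg.brkt (X * CondAlg.inv Y)))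
  | sub_ann_left (X₀ X₁ : C) (x y : CN C) :
      CNEqRed (.sub (.ann X₀ X₁ x) y) (.ann X₀ X₁ (.sub x y))

/-- Constructor numbers: CN terms built only from the constructors
`A·0`, `(A suc)a`, `(A,B ann)a`. -/
inductive IsCon : CN C → Prop
  | zero (A : C) : IsCon (.zero A)
  | suc (A : C) {a} : IsCon a → IsCon (.suc A a)
  | ann (A B : C) {a} : IsCon a → IsCon (.ann A B a)

/-!
Distribute the copies over `y`, so that `y⁰` and `y¹` carry the conditions `A⁰` and `A¹` of `y`
in the same positions, and pull the constructors of `x` out of the sum. Each constructor of `y⁰`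
then commutes through `x` to meet its partner in `y¹`: a pair of successors becomes
`(A⁰, A¹ ann)`, a pair of annihilations is regrouped by the exchange law into `(A⁰, A¹ ann)` and
`(B¹, B⁰ ann)`, and the zeros leave `⟨X A⁰ (A¹)⁻⟩·0`. Since `A⁰ (A¹)⁻ = I`, and hence
`A¹ (A⁰)⁻ = I`, all of these vanish.
-/

namespace CondAlg

theorem inv_one : inv (1 : C) = 1 := by
  simpa [inv_inv] using (inv_mul (1 : C) (inv 1)).symm

theorem c1_mul_inv_c0 (A : C) : c1 A * inv (c0 A) = 1 := by
  simpa [inv_mul, inv_inv, inv_one, mul_comm] using congrArg inv (copy_cancel A)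

end CondAlg

instance : Trans (CNEqRed (C := C)) (CNEqRed (C := C)) (CNEqRed (C := C)) := ⟨CNEqRed.trans⟩

local infix:50 " →̲ " => CNEqRed

namespace CN

def mapCond (f : C → C) : CN C → CN C
  | zero A => zero (f A)
  | suc A a => suc (f A) (a.mapCond f)
  | ann A B a => ann (f A) (f B) (a.mapCond f)
  | copy0 a => copy0 (a.mapCond f)
  | copy1 a => copy1 (a.mapCond f)
  | add a b => add (a.mapCond f) (b.mapCond f)
  | sub a b => sub (a.mapCond f) (b.mapCond f)

def pullAdd : CN C → CN C → CN C
  | suc X x, m => suc X (x.pullAdd m)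
  | ann X₀ X₁ x, m => ann X₀ X₁ (x.pullAdd m)
  | x, m => add x m

end CN

namespace CNSmooth

theorem copy0_mapCond {y : CN C} (hy : IsCon y) : CNSmooth (.copy0 y) (y.mapCond c0) := by
  induction hy with
  | zero A => exact copy0_zero A
  | suc A _ ih => exact (copy0_suc A _).trans (suc_congr _ ih)
  | ann A B _ ih => exact (copy0_ann A B _).trans (ann_congr _ _ ih)

theorem copy1_mapCond {y : CN C} (hy : IsCon y) : CNSmooth (.copy1 y) (y.mapCond c1) := by
  induction hy with
  | zero A => exact copy1_zero A
  | suc A _ ih => exact (copy1_suc A _).trans (suc_congr _ ih)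
  | ann A B _ ih => exact (copy1_ann A B _).trans (ann_congr _ _ ih)

end CNSmooth

namespace CNEqRed

theorem add_pullAdd (x m : CN C) : .add x m →̲ x.pullAdd m := by
  induction x with
  | suc X x ih => exact (add_suc _ _ _).trans (suc_congr _ ih)
  | ann X₀ X₁ x ih => exact (add_ann _ _ _ _).trans (ann_congr _ _ ih)
  | _ => exact refl _

theorem pullAdd_suc {x : CN C} (hx : IsCon x) (B : C) (m : CN C) :
    x.pullAdd (.suc B m) →̲ .suc B (x.pullAdd m) := by
  induction hx with
  | zero A => exact add_zero_suc _ _ _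
  | suc A _ ih => exact (suc_congr _ ih).trans (of_smooth (.exch_suc_suc _ _ _))
  | ann A₀ A₁ _ ih => exact (ann_congr _ _ ih).trans (of_smooth (CNSmooth.exch_ann_suc _ _ _ _))

theorem pullAdd_ann {x : CN C} (hx : IsCon x) (B₀ B₁ : C) (m : CN C) :
    x.pullAdd (.ann B₀ B₁ m) →̲ .ann B₀ B₁ (x.pullAdd m) := by
  induction hx with
  | zero A => exact add_zero_ann _ _ _ _
  | suc A _ ih => exact (suc_congr _ ih).trans (of_smooth (CNSmooth.exch_ann_suc _ _ _ _).symm)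
  | ann A₀ A₁ _ ih => exact (ann_congr _ _ ih).trans (of_smooth (.exch_ann_ann _ _ _ _ _))

theorem sub_pullAdd_zero {x : CN C} (hx : IsCon x) {B₀ B₁ : C} (hB : B₀ * inv B₁ = 1) :
    .sub (x.pullAdd (.zero B₀)) (.zero B₁) →̲ x := by
  induction hx with
  | zero X =>
    calc .sub (.add (.zero X) (.zero B₀)) (.zero B₁)
        _ →̲ .sub (.zero (X * B₀)) (.zero B₁) :=
          sub_congr ((add_zero_zero X B₀).trans (of_smooth (.symm (.brkt_zero _)))) (refl _)
        _ →̲ .zero (brkt (X * B₀ * inv B₁)) := sub_zero_zero _ _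
        _ →̲ .zero X := by
          rw [mul_assoc, hB, mul_one]
          exact of_smooth (.symm (.brkt_zero X))
  | suc A _ ih => exact (sub_suc_zero _ _ _).trans (suc_congr _ ih)
  | ann A₀ A₁ _ ih => exact (sub_ann_left _ _ _ _).trans (ann_congr _ _ ih)

theorem sub_pullAdd_mapCond_copies {y : CN C} (hy : IsCon y) {x : CN C} (hx : IsCon x) :
    .sub (x.pullAdd (y.mapCond c0)) (y.mapCond c1) →̲ x := by
  induction hy with
  | zero A => exact sub_pullAdd_zero hx (copy_cancel A)
  | @suc A y _ ih =>
    calc .sub (x.pullAdd (.suc (c0 A) (y.mapCond c0))) (.suc (c1 A) (y.mapCond c1))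
        _ →̲ .sub (.suc (c0 A) (x.pullAdd (y.mapCond c0))) (.suc (c1 A) (y.mapCond c1)) :=
          sub_congr (pullAdd_suc hx _ _) (refl _)
        _ →̲ .ann (c0 A) (c1 A) (.sub (x.pullAdd (y.mapCond c0)) (y.mapCond c1)) :=
          sub_suc_suc _ _ _ _
        _ →̲ .ann (c0 A) (c1 A) x := ann_congr _ _ ih
        _ →̲ x := of_smooth (.inv_simp _ _ _ (copy_cancel A))
  | @ann A B y _ ih =>
    calc .sub (x.pullAdd (.ann (c0 A) (c0 B) (y.mapCond c0))) (.ann (c1 A) (c1 B) (y.mapCond c1))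
        _ →̲ .ann (c1 B) (c1 A) (.sub (x.pullAdd (.ann (c0 A) (c0 B) (y.mapCond c0)))
            (y.mapCond c1)) := sub_ann _ _ _ _
        _ →̲ .ann (c1 B) (c1 A) (.ann (c0 A) (c0 B)
            (.sub (x.pullAdd (y.mapCond c0)) (y.mapCond c1))) :=
          ann_congr _ _ ((sub_congr (pullAdd_ann hx _ _ _) (refl _)).trans (sub_ann_left _ _ _ _))
        _ →̲ .ann (c1 B) (c1 A) (.ann (c0 A) (c0 B) x) := ann_congr _ _ (ann_congr _ _ ih)
        _ →̲ .ann (c1 B) (c0 B) (.ann (c0 A) (c1 A) x) := of_smooth (.exch_ann_ann' _ _ _ _ _)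
        _ →̲ .ann (c1 B) (c0 B) x := ann_congr _ _ (of_smooth (.inv_simp _ _ _ (copy_cancel A)))
        _ →̲ x := of_smooth (.inv_simp _ _ _ (c1_mul_inv_c0 B))

end CNEqRed

/-- `(x + y⁰) − y¹ →̲ x` for all constructor numbers `x, y`. -/
theorem add_sub_copies (x y : CN C) (hx : IsCon x) (hy : IsCon y) :
    CNEqRed (.sub (.add x (.copy0 y)) (.copy1 y)) x :=
  calc .sub (.add x (.copy0 y)) (.copy1 y)
      _ →̲ .sub (.add x (y.mapCond c0)) (y.mapCond c1) :=
        .sub_congr (.add_congr (.refl x) (.of_smooth (.copy0_mapCond hy)))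
          (.of_smooth (.copy1_mapCond hy))
      _ →̲ .sub (x.pullAdd (y.mapCond c0)) (y.mapCond c1) :=
        .sub_congr (.add_pullAdd x _) (.refl _)
      _ →̲ x := .sub_pullAdd_mapCond_copies hy hx
end
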